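/- (Deterministic confidence bound; key inequality in the proof of Theorem 1.) Under the GP posterior setup, suppose Y_i = ⟪φ(θ_i), w⟫ + ε_i for some w ∈ E with ‖w‖ ≤ B and noise satisfying |ε_i| ≤ η for i = 1, …, N, and set β = √(B² + N − Yᵀ (K + η² I_N)⁻¹ Y). Then for every θ ∈ Θ, |μ(θ) − ⟪φ(θ), w⟫| ≤ β · σ(θ), where σ(θ) = √(σ²(θ)). -/

import Mathlib

/-!
Append the noise as extra coordinates: in `E × ℝᴺ` the training points become
`ψᵢ = (φ θᵢ, η eᵢ)`, whose Gram matrix is `K + η² I`, the test point becomes `x = (φ θ, 0)` and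
the truth becomes `y = (w, ε / η)`, so that `⟪ψᵢ, y⟫ = Yᵢ` and `⟪x, y⟫ = ⟪φ θ, w⟫`.
Then `⟪x, y⟫ - μ θ`, `σ²(θ)` and `‖y‖² - Yᵀ (K + η² I)⁻¹ Y` are the inner products of the
components of `x` and `y` orthogonal to the `ψᵢ`, and Cauchy–Schwarz for these components is the
bound, with `‖y‖² ≤ B² + N`.
-/

open Matrix RealInnerProductSpace

section GramResidual

variable {ι H : Type*} [Fintype ι] [DecidableEq ι] [NormedAddCommGroup H] [InnerProductSpace ℝ H]

/-- When the Gram matrix of `g` is invertible, this is `x` minus its orthogonal projection onto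
the span of the `g i`. -/
noncomputable def gramResidual (g : ι → H) (x : H) : H :=
  x - ∑ i, ((gram ℝ g)⁻¹ *ᵥ fun j => ⟪g j, x⟫) i • g i

omit [DecidableEq ι] in
theorem inner_sum_smul_eq_gram_mulVec (g : ι → H) (c : ι → ℝ) (j : ι) :
    ⟪g j, ∑ i, c i • g i⟫ = (gram ℝ g *ᵥ c) j := by
  simp [inner_sum, real_inner_smul_right, mulVec, dotProduct, mul_comm]

variable {g : ι → H}

theorem inner_gramResidual_eq_zero (hg : IsUnit (gram ℝ g).det) (j : ι) (x : H) :
    ⟪g j, gramResidual g x⟫ = 0 := by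
  rw [gramResidual, inner_sub_right, inner_sum_smul_eq_gram_mulVec, mulVec_mulVec,
    mul_nonsing_inv _ hg, one_mulVec, sub_self]

theorem inner_gramResidual_gramResidual (hg : IsUnit (gram ℝ g).det) (x y : H) :
    ⟪gramResidual g x, gramResidual g y⟫ =
      ⟪x, y⟫ - (fun i => ⟪g i, x⟫) ⬝ᵥ ((gram ℝ g)⁻¹ *ᵥ fun i => ⟪g i, y⟫) := by
  have h : ⟪gramResidual g x, gramResidual g y⟫ = ⟪x, gramResidual g y⟫ := by
    conv_lhs => rw [gramResidual]
    simp [inner_sub_left, sum_inner, real_inner_smul_left, inner_gramResidual_eq_zero hg]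
  rw [h, gramResidual, inner_sub_right, inner_sum]
  simp [real_inner_smul_right, dotProduct, real_inner_comm, mul_comm]

theorem abs_inner_sub_gram_le (hg : IsUnit (gram ℝ g).det) (x y : H) :
    |⟪x, y⟫ - (fun i => ⟪g i, x⟫) ⬝ᵥ ((gram ℝ g)⁻¹ *ᵥ fun i => ⟪g i, y⟫)| ≤
      √(⟪x, x⟫ - (fun i => ⟪g i, x⟫) ⬝ᵥ ((gram ℝ g)⁻¹ *ᵥ fun i => ⟪g i, x⟫)) *
        √(⟪y, y⟫ - (fun i => ⟪g i, y⟫) ⬝ᵥ ((gram ℝ g)⁻¹ *ᵥ fun i => ⟪g i, y⟫)) := by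
  rw [← inner_gramResidual_gramResidual hg, ← inner_gramResidual_gramResidual hg,
    ← inner_gramResidual_gramResidual hg, real_inner_self_eq_norm_sq, real_inner_self_eq_norm_sq,
    Real.sqrt_sq (norm_nonneg _), Real.sqrt_sq (norm_nonneg _)]
  exact abs_real_inner_le_norm _ _

end GramResidual

section NoisyFeature

variable {ι E : Type*} [Fintype ι] [DecidableEq ι] [NormedAddCommGroup E] [InnerProductSpace ℝ E]

noncomputable def noisyFeature (v : ι → E) (η : ℝ) (i : ι) : WithLp 2 (E × EuclideanSpace ℝ ι) :=
  WithLp.toLp 2 (v i, η • EuclideanSpace.single i 1)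

theorem inner_noisyFeature (v : ι → E) (η : ℝ) (i : ι) (x : E) (e : EuclideanSpace ℝ ι) :
    ⟪noisyFeature v η i, WithLp.toLp 2 (x, e)⟫ = ⟪v i, x⟫ + η * e i := by
  simp [noisyFeature, real_inner_smul_left, EuclideanSpace.inner_single_left]

theorem gram_noisyFeature (v : ι → E) (η : ℝ) :
    gram ℝ (noisyFeature v η) = gram ℝ v + η ^ 2 • 1 := by
  ext i j
  change ⟪noisyFeature v η i, WithLp.toLp 2 (v j, η • EuclideanSpace.single j 1)⟫ = _
  rw [inner_noisyFeature]
  by_cases h : i = j <;> simp [h, sq]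

theorem isUnit_det_gram_noisyFeature (v : ι → E) {η : ℝ} (hη : η ≠ 0) :
    IsUnit (gram ℝ (noisyFeature v η)).det := by
  rw [gram_noisyFeature, ← isUnit_iff_isUnit_det]
  exact (PosDef.posSemidef_add (posSemidef_gram ℝ v) (PosDef.one.smul (by positivity))).isUnit

end NoisyFeature

theorem norm_inv_smul_sq_le_card {ι : Type*} [Fintype ι] {η : ℝ} (hη : 0 < η) {ε : ι → ℝ}
    (hε : ∀ i, |ε i| ≤ η) : ‖η⁻¹ • WithLp.toLp 2 ε‖ ^ 2 ≤ Fintype.card ι := by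
  rw [EuclideanSpace.norm_sq_eq]
  calc ∑ i, ‖(η⁻¹ • WithLp.toLp 2 ε) i‖ ^ 2 ≤ ∑ _i : ι, (1 : ℝ) := by
        gcongr with i
        rw [PiLp.smul_apply, norm_smul, mul_pow, norm_inv, Real.norm_of_nonneg hη.le,
          inv_pow, inv_mul_le_one₀ (by positivity), Real.norm_eq_abs, sq_le_sq, abs_of_pos hη]
        simpa using hε i
    _ = Fintype.card ι := by simp

theorem gp_confidence_bound_general
    {Θ : Type*} {E : Type*}
    [NormedAddCommGroup E] [InnerProductSpace ℝ E]
    (φ : Θ → E) (k : Θ → Θ → ℝ)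
    (hk : ∀ θ θ' : Θ, k θ θ' = ⟪φ θ, φ θ'⟫)
    {N : ℕ} (θi : Fin N → Θ)
    (K : Matrix (Fin N) (Fin N) ℝ)
    (hK : ∀ i j, K i j = k (θi i) (θi j))
    (kstar : Θ → Fin N → ℝ)
    (hkstar : ∀ θ i, kstar θ i = k θ (θi i))
    (η : ℝ) (hη : 0 < η)
    (Y : Fin N → ℝ) (w : E) (B : ℝ) (hw : ‖w‖ ≤ B)
    (ε : Fin N → ℝ) (hε : ∀ i, |ε i| ≤ η)
    (hY : ∀ i, Y i = ⟪φ (θi i), w⟫ + ε i)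
    (μ : Θ → ℝ)
    (hμ : ∀ θ, μ θ = kstar θ ⬝ᵥ ((K + η ^ 2 • 1)⁻¹ *ᵥ Y))
    (σsq : Θ → ℝ)
    (hσ : ∀ θ, σsq θ = k θ θ - kstar θ ⬝ᵥ ((K + η ^ 2 • 1)⁻¹ *ᵥ kstar θ))
    (β : ℝ)
    (hβ : β = Real.sqrt (B ^ 2 + N - Y ⬝ᵥ ((K + η ^ 2 • 1)⁻¹ *ᵥ Y))) :
    ∀ θ : Θ, |μ θ - ⟪φ θ, w⟫| ≤ β * Real.sqrt (σsq θ) := by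
  intro θ
  set ψ := noisyFeature (φ ∘ θi) η
  have hgram : gram ℝ ψ = K + η ^ 2 • 1 := by
    rw [gram_noisyFeature]
    congr 1
    ext i j
    simp [hK, hk]
  set x : WithLp 2 (E × EuclideanSpace ℝ (Fin N)) := WithLp.toLp 2 (φ θ, 0)
  set y : WithLp 2 (E × EuclideanSpace ℝ (Fin N)) := WithLp.toLp 2 (w, η⁻¹ • WithLp.toLp 2 ε)
  have hx : (fun i => ⟪ψ i, x⟫) = kstar θ := by
    ext i
    simp [ψ, x, noisyFeature, hkstar, hk, real_inner_comm]
  have hy : (fun i => ⟪ψ i, y⟫) = Y := by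
    ext i
    rw [inner_noisyFeature, hY]
    simp [hη.ne']
  have hxx : ⟪x, x⟫ = k θ θ := by simp [x, hk]
  have hxy : ⟪x, y⟫ = ⟪φ θ, w⟫ := by simp [x, y]
  have hyy : ⟪y, y⟫ ≤ B ^ 2 + N := by
    have hnoise := norm_inv_smul_sq_le_card hη hε
    rw [Fintype.card_fin] at hnoise
    rw [WithLp.prod_inner_apply, real_inner_self_eq_norm_sq, real_inner_self_eq_norm_sq]
    nlinarith [norm_nonneg w]
  have hcs := abs_inner_sub_gram_le (isUnit_det_gram_noisyFeature (φ ∘ θi) hη.ne') x y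
  rw [hgram, hx, hy, hxx, hxy] at hcs
  rw [hμ, hσ, hβ, abs_sub_comm, mul_comm]
  exact hcs.trans (mul_le_mul_of_nonneg_left (Real.sqrt_le_sqrt (by linarith)) (Real.sqrt_nonneg _))

/-- deterministic confidence bound, key inequality in Theorem 1:
Under the GP posterior setup, if `Y_i = ⟪φ(θ_i), w⟫ + ε_i` with `‖w‖ ≤ B` and
`|ε_i| ≤ η`, and `β = √(B² + N − Yᵀ (K + η² I_N)⁻¹ Y)`, then for every `θ`,
`|μ(θ) − ⟪φ(θ), w⟫| ≤ β · σ(θ)`, where `σ(θ) = √(σ²(θ))`. -/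
theorem gp_confidence_bound
    {Θ : Type*} [Nonempty Θ] {E : Type*}
    [NormedAddCommGroup E] [InnerProductSpace ℝ E] [CompleteSpace E]
    (φ : Θ → E) (k : Θ → Θ → ℝ)
    (hk : ∀ θ θ' : Θ, k θ θ' = ⟪φ θ, φ θ'⟫)
    {N : ℕ} (θi : Fin N → Θ)
    (K : Matrix (Fin N) (Fin N) ℝ)
    (hK : ∀ i j, K i j = k (θi i) (θi j))
    (kstar : Θ → Fin N → ℝ)
    (hkstar : ∀ θ i, kstar θ i = k θ (θi i))
    (η : ℝ) (hη : 0 < η)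
    (Y : Fin N → ℝ) (w : E) (B : ℝ) (hw : ‖w‖ ≤ B)
    (ε : Fin N → ℝ) (hε : ∀ i, |ε i| ≤ η)
    (hY : ∀ i, Y i = ⟪φ (θi i), w⟫ + ε i)
    (μ : Θ → ℝ)
    (hμ : ∀ θ, μ θ = kstar θ ⬝ᵥ ((K + η ^ 2 • 1)⁻¹ *ᵥ Y))
    (σsq : Θ → ℝ)
    (hσ : ∀ θ, σsq θ = k θ θ - kstar θ ⬝ᵥ ((K + η ^ 2 • 1)⁻¹ *ᵥ kstar θ))
    (β : ℝ)
    (hβ : β = Real.sqrt (B ^ 2 + N - Y ⬝ᵥ ((K + η ^ 2 • 1)⁻¹ *ᵥ Y))) :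
    ∀ θ : Θ, |μ θ - ⟪φ θ, w⟫| ≤ β * Real.sqrt (σsq θ) :=
  gp_confidence_bound_general φ k hk θi K hK kstar hkstar η hη Y w B hw ε hε hY μ hμ σsq hσ β hβ
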